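/- Consider the planar VTOL aircraft: ẋ¹ = x⁴, ẋ² = x⁵, ẋ³ = x⁶, ẋ⁴ = ((u¹+u²)/m) cos α sin x³ + ((u¹−u²)/m) sin α cos x³, ẋ⁵ = ((u¹+u²)/m) cos α cos x³ + ((u²−u¹)/m) sin α sin x³ − g, ẋ⁶ = ((u²−u¹)/J)(l cos α + h sin α), with m, J > 0, l cos α + h sin α ≠ 0, and set ε = J sin α/(m(l cos α + h sin α)). Then along any solution, the functions y¹ = x¹ + ε sin x³ and y² = x² + ε cos x³ satisfy ÿ¹ = ((u¹+u²)/m) cos α sin x³ + (terms that cancel): specifically ÿ¹ = (1/m)(u¹+u²) cos α sin x³ + (1/m)(u¹−u²) sin α cos x³ + ε(ẋ⁶ cos x³ − (x⁶)² sin x³) = ((u¹+u²) cos α /m − ε (x⁶)²) sin x³ and ÿ² = ((u¹+u²) cos α/m − ε(x⁶)²) cos x³ − g. In particular (ÿ¹, ÿ² + g) is parallel to (sin x³, cos x³), so tan(x³) = ÿ¹/(ÿ² + g) whenever ÿ² + g ≠ 0. -/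

import Mathlib

open Real

/-!
Differentiating `x + ε sin θ` twice produces, besides `ẍ`, the terms `ε (θ̈ cos θ - θ̇² sin θ)`.
Since the torque `θ̈` and the lateral thrust component are both proportional to `u² - u¹`,
the choice of `ε` makes `ε θ̈` cancel the `sin α` part of the acceleration exactly, so the
second derivative of the output is a multiple of `(sin x³, cos x³)` shifted by gravity.
-/

theorem deriv_deriv_add_const_mul_sin {x v θ ω : ℝ → ℝ} {t : ℝ} (ε : ℝ)
    (hx : ∀ s, HasDerivAt x (v s) s) (hθ : ∀ s, HasDerivAt θ (ω s) s)
    (hv : DifferentiableAt ℝ v t) (hω : DifferentiableAt ℝ ω t) :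
    deriv (deriv fun s => x s + ε * sin (θ s)) t =
      deriv v t + ε * (deriv ω t * cos (θ t) - ω t ^ 2 * sin (θ t)) := by
  have hfirst : deriv (fun s => x s + ε * sin (θ s)) = fun s => v s + ε * (cos (θ s) * ω s) :=
    funext fun s => ((hx s).add ((hθ s).sin.const_mul ε)).deriv
  have hsecond : HasDerivAt (fun s => v s + ε * (cos (θ s) * ω s))
      (deriv v t + ε * (-sin (θ t) * ω t * ω t + cos (θ t) * deriv ω t)) t :=
    hv.hasDerivAt.add (((hθ t).cos.mul hω.hasDerivAt).const_mul ε)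
  rw [hfirst, hsecond.deriv]
  ring

theorem deriv_deriv_add_const_mul_cos {x v θ ω : ℝ → ℝ} {t : ℝ} (ε : ℝ)
    (hx : ∀ s, HasDerivAt x (v s) s) (hθ : ∀ s, HasDerivAt θ (ω s) s)
    (hv : DifferentiableAt ℝ v t) (hω : DifferentiableAt ℝ ω t) :
    deriv (deriv fun s => x s + ε * cos (θ s)) t =
      deriv v t - ε * (deriv ω t * sin (θ t) + ω t ^ 2 * cos (θ t)) := by
  have hfirst : deriv (fun s => x s + ε * cos (θ s)) = fun s => v s + ε * (-sin (θ s) * ω s) :=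
    funext fun s => ((hx s).add ((hθ s).cos.const_mul ε)).deriv
  have hsecond : HasDerivAt (fun s => v s + ε * (-sin (θ s) * ω s))
      (deriv v t + ε * (-(cos (θ t) * ω t) * ω t + -sin (θ t) * deriv ω t)) t :=
    hv.hasDerivAt.add (((hθ t).sin.neg.mul hω.hasDerivAt).const_mul ε)
  rw [hfirst, hsecond.deriv]
  ring

theorem mul_div_mul_mul_div_mul_cancel {K : Type*} [Field K] {a d : K} (b c w : K)
    (ha : a ≠ 0) (hd : d ≠ 0) : a * b / (c * d) * (w / a * d) = w / c * b := by
  field_simp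

theorem tan_eq_mul_sin_div_mul_cos {c θ : ℝ} (h : c * cos θ ≠ 0) :
    tan θ = c * sin θ / (c * cos θ) := by
  rw [tan_eq_sin_div_cos, mul_div_mul_left _ _ (left_ne_zero_of_mul h)]

theorem vtol_flat_output_second_derivatives_general
    (m J l h α g ε : ℝ) (hJ : 0 < J)
    (hden : l * Real.cos α + h * Real.sin α ≠ 0)
    (hε : ε = J * Real.sin α / (m * (l * Real.cos α + h * Real.sin α)))
    (x1 x2 x3 x4 x5 x6 u1 u2 : ℝ → ℝ)
    (hd1 : Differentiable ℝ x1) (hd2 : Differentiable ℝ x2)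
    (hd3 : Differentiable ℝ x3) (hd4 : Differentiable ℝ x4)
    (hd5 : Differentiable ℝ x5) (hd6 : Differentiable ℝ x6)
    -- system equations (21)
    (h1 : ∀ t, deriv x1 t = x4 t)
    (h2 : ∀ t, deriv x2 t = x5 t)
    (h3 : ∀ t, deriv x3 t = x6 t)
    (h4 : ∀ t, deriv x4 t =
      (u1 t + u2 t) / m * Real.cos α * Real.sin (x3 t) +
      (u1 t - u2 t) / m * Real.sin α * Real.cos (x3 t))
    (h5 : ∀ t, deriv x5 t =
      (u1 t + u2 t) / m * Real.cos α * Real.cos (x3 t) +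
      (u2 t - u1 t) / m * Real.sin α * Real.sin (x3 t) - g)
    (h6 : ∀ t, deriv x6 t =
      (u2 t - u1 t) / J * (l * Real.cos α + h * Real.sin α)) :
    let y1 : ℝ → ℝ := fun t => x1 t + ε * Real.sin (x3 t)
    let y2 : ℝ → ℝ := fun t => x2 t + ε * Real.cos (x3 t)
    ∀ t : ℝ,
      deriv (deriv y1) t =
        ((u1 t + u2 t) * Real.cos α / m - ε * (x6 t) ^ 2) * Real.sin (x3 t) ∧
      deriv (deriv y2) t =
        ((u1 t + u2 t) * Real.cos α / m - ε * (x6 t) ^ 2) * Real.cos (x3 t) - g ∧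
      (deriv (deriv y2) t + g ≠ 0 →
        Real.tan (x3 t) = deriv (deriv y1) t / (deriv (deriv y2) t + g)) := by
  intro y1 y2 t
  have hasDeriv {f f' : ℝ → ℝ} (hf : Differentiable ℝ f) (hf' : ∀ s, deriv f s = f' s) (s : ℝ) :
      HasDerivAt f (f' s) s :=
    hf' s ▸ (hf s).hasDerivAt
  have hθ := hasDeriv hd3 h3
  have hcancel : ε * deriv x6 t = (u2 t - u1 t) / m * sin α := by
    rw [h6, hε, mul_div_mul_mul_div_mul_cancel _ _ _ hJ.ne' hden]
  have e1 : deriv (deriv y1) t =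
      ((u1 t + u2 t) * cos α / m - ε * x6 t ^ 2) * sin (x3 t) := by
    rw [deriv_deriv_add_const_mul_sin ε (hasDeriv hd1 h1) hθ (hd4 t) (hd6 t), h4]
    linear_combination cos (x3 t) * hcancel
  have e2 : deriv (deriv y2) t =
      ((u1 t + u2 t) * cos α / m - ε * x6 t ^ 2) * cos (x3 t) - g := by
    rw [deriv_deriv_add_const_mul_cos ε (hasDeriv hd2 h2) hθ (hd5 t) (hd6 t), h5]
    linear_combination -sin (x3 t) * hcancel
  refine ⟨e1, e2, fun hne => ?_⟩
  rw [e2, sub_add_cancel] at hne ⊢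
  rw [e1]
  exact tan_eq_mul_sin_div_mul_cos hne

/-- Along any solution of the planar VTOL aircraft, the Huygens output
`y¹ = x¹ + ε sin x³`, `y² = x² + ε cos x³` with `ε = J sin α/(m(l cos α + h sin α))`
satisfies `ÿ¹ = C sin x³` and `ÿ² = C cos x³ − g` with
`C = (u¹+u²) cos α/m − ε (x⁶)²`; in particular `tan x³ = ÿ¹/(ÿ² + g)` whenever
`ÿ² + g ≠ 0`. -/
theorem vtol_flat_output_second_derivatives
    (m J l h α g ε : ℝ) (hm : 0 < m) (hJ : 0 < J)
    (hden : l * Real.cos α + h * Real.sin α ≠ 0)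
    (hε : ε = J * Real.sin α / (m * (l * Real.cos α + h * Real.sin α)))
    (x1 x2 x3 x4 x5 x6 u1 u2 : ℝ → ℝ)
    (hd1 : Differentiable ℝ x1) (hd2 : Differentiable ℝ x2)
    (hd3 : Differentiable ℝ x3) (hd4 : Differentiable ℝ x4)
    (hd5 : Differentiable ℝ x5) (hd6 : Differentiable ℝ x6)
    -- system equations (21)
    (h1 : ∀ t, deriv x1 t = x4 t)
    (h2 : ∀ t, deriv x2 t = x5 t)
    (h3 : ∀ t, deriv x3 t = x6 t)
    (h4 : ∀ t, deriv x4 t =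
      (u1 t + u2 t) / m * Real.cos α * Real.sin (x3 t) +
      (u1 t - u2 t) / m * Real.sin α * Real.cos (x3 t))
    (h5 : ∀ t, deriv x5 t =
      (u1 t + u2 t) / m * Real.cos α * Real.cos (x3 t) +
      (u2 t - u1 t) / m * Real.sin α * Real.sin (x3 t) - g)
    (h6 : ∀ t, deriv x6 t =
      (u2 t - u1 t) / J * (l * Real.cos α + h * Real.sin α)) :
    let y1 : ℝ → ℝ := fun t => x1 t + ε * Real.sin (x3 t)
    let y2 : ℝ → ℝ := fun t => x2 t + ε * Real.cos (x3 t)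
    ∀ t : ℝ,
      deriv (deriv y1) t =
        ((u1 t + u2 t) * Real.cos α / m - ε * (x6 t) ^ 2) * Real.sin (x3 t) ∧
      deriv (deriv y2) t =
        ((u1 t + u2 t) * Real.cos α / m - ε * (x6 t) ^ 2) * Real.cos (x3 t) - g ∧
      (deriv (deriv y2) t + g ≠ 0 →
        Real.tan (x3 t) = deriv (deriv y1) t / (deriv (deriv y2) t + g)) :=
  vtol_flat_output_second_derivatives_general m J l h α g ε hJ hden hε x1 x2 x3 x4 x5 x6 u1 u2 hd1
    hd2 hd3 hd4 hd5 hd6 h1 h2 h3 h4 h5 h6
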